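/- arXiv:2503.11820 — 5 statements merged into one kernel-verified Lean document; each statement's English description precedes it below -/
import Mathlib

section
/- Let α : G' → G be a graph homomorphism between finite DAGs (α maps every directed edge v → w of G' to a directed edge α(v) → α(w) of G, or to a single vertex when α(v) = α(w)). Then α is also a graph homomorphism between the moralisations mor(G') → mor(G): every undirected edge v — w of mor(G') is mapped either to an undirected edge of mor(G) or to a single vertex. -/
/-- Moralisation of a DAG with edge relation `E`: undirected adjacency. -/
def moral {V : Type*} (E : V → V → Prop) (v w : V) : Prop :=
  v ≠ w ∧ (E v w ∨ E w v ∨ ∃ u, E v u ∧ E w u)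

section

variable {V' V : Type*} {E' : V' → V' → Prop} {E : V → V → Prop} {α : V' → V}

lemma map_commonChild (hhom : ∀ v w, E' v w → α v = α w ∨ E (α v) (α w))
    {u v w : V'} (hvu : E' v u) (hwu : E' w u) (hne : α v ≠ α w) :
    E (α v) (α w) ∨ E (α w) (α v) ∨ ∃ x, E (α v) x ∧ E (α w) x := by
  rcases hhom v u hvu with hv | hv <;> rcases hhom w u hwu with hw | hw
  · exact absurd (hv.trans hw.symm) hne
  · exact .inr (.inl (hv ▸ hw))
  · exact .inl (hw ▸ hv)
  · exact .inr (.inr ⟨α u, hv, hw⟩)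

end

theorem stmt_4_general {V' V : Type*}
    (E' : V' → V' → Prop) (E : V → V → Prop) (α : V' → V)
    (hhom : ∀ v w, E' v w → α v = α w ∨ E (α v) (α w)) :
    ∀ v w, moral E' v w → α v = α w ∨ moral E (α v) (α w) := by
  rintro v w ⟨-, hvw⟩
  refine or_iff_not_imp_left.2 fun hne => ⟨hne, ?_⟩
  rcases hvw with hvw | hwv | ⟨u, hvu, hwu⟩
  · exact .inl ((hhom v w hvw).resolve_left hne)
  · exact .inr (.inl ((hhom w v hwv).resolve_left (Ne.symm hne)))
  · exact map_commonChild hhom hvu hwu hne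

/-- A DAG homomorphism induces a homomorphism between moralisations. -/
theorem stmt_4 {V' V : Type*} [Fintype V'] [Fintype V]
    (E' : V' → V' → Prop) (E : V → V → Prop) (α : V' → V)
    (hhom : ∀ v w, E' v w → α v = α w ∨ E (α v) (α w)) :
    ∀ v w, moral E' v w → α v = α w ∨ moral E (α v) (α w) :=
  stmt_4_general E' E α hhom
end

section
/- Let H be a finite undirected graph equipped with a total order ≤ on its vertices, and let tr(H) be its triangulation: there is a directed edge v → w in tr(H) whenever v < w and there exists a path v — w₁ — ⋯ — wₙ = w in H with wᵢ ≥ w for all i. Then tr(H) satisfies: for all vertices u, v, w, if u → w and v → w in tr(H) and u < v, then u → v in tr(H). -/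
/-!
Let `u < v` both be parents of `w`. Walking from `u` to `w` and then back along the walk from `v`
to `w` (reversed, which is legitimate since `H` is undirected) gives a walk from `u` to `v` whose
vertices after `u` are all `≥ w` or equal to `v`, hence all `≥ v` because `v < w`.
-/

/-- Triangulation edge: `v → w` iff `v < w` and there is a path
`v — w₁ — ⋯ — wₙ = w` in the undirected graph `adj` with all `wᵢ ≥ w`. -/
def trEdge {V : Type*} [LinearOrder V] (adj : V → V → Prop) (v w : V) : Prop :=
  v < w ∧ ∃ l : List V, List.Chain adj v (l ++ [w]) ∧ ∀ x ∈ l ++ [w], w ≤ x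

theorem List.IsChain.reverse_of_symmetric {α : Type*} {R : α → α → Prop}
    (hR : ∀ ⦃a b⦄, R a b → R b a) {l : List α} (h : l.IsChain R) : l.reverse.IsChain R :=
  List.isChain_reverse.2 (h.imp fun _ _ hab => hR hab)

theorem List.IsChain.append_reverse_of_symmetric {α : Type*} {R : α → α → Prop}
    (hR : ∀ ⦃a b⦄, R a b → R b a) {u v w : α} {l₁ l₂ : List α}
    (h₁ : (u :: (l₁ ++ [w])).IsChain R) (h₂ : (v :: (l₂ ++ [w])).IsChain R) :
    (u :: (l₁ ++ [w] ++ l₂.reverse ++ [v])).IsChain R := by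
  have h₂' : ([w] ++ (l₂.reverse ++ [v])).IsChain R := by
    simpa using h₂.reverse_of_symmetric hR
  simpa [List.append_assoc] using
    List.IsChain.append_overlap (l₁ := u :: l₁) h₁ h₂' (List.cons_ne_nil w [])

theorem stmt_5_general {V : Type*} [LinearOrder V]
    (adj : V → V → Prop) (hsymm : Symmetric adj) :
    ∀ u v w : V, trEdge adj u w → trEdge adj v w → u < v → trEdge adj u v := by
  rintro u v w ⟨-, l₁, hc₁, hb₁⟩ ⟨hvw, l₂, hc₂, hb₂⟩ huv
  refine ⟨huv, l₁ ++ [w] ++ l₂.reverse, hc₁.append_reverse_of_symmetric hsymm hc₂, ?_⟩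
  intro x hx
  simp only [List.append_assoc, List.mem_append, List.mem_singleton, List.mem_reverse] at hx
  rcases hx with hx | rfl | hx | rfl
  · exact hvw.le.trans (hb₁ x (by simp [hx]))
  · exact hvw.le
  · exact hvw.le.trans (hb₂ x (by simp [hx]))
  · exact le_rfl

/-- The triangulation satisfies: two parents of a common vertex are joined by
an edge in the direction of the order. -/
theorem stmt_5 {V : Type*} [Fintype V] [LinearOrder V]
    (adj : V → V → Prop) (hsymm : Symmetric adj) :
    ∀ u v w : V, trEdge adj u w → trEdge adj v w → u < v → trEdge adj u v :=
  stmt_5_general adj hsymm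
end

section
/- Let H be a finite ordered undirected graph and tr(H) its triangulation. For each vertex v, let C_v be the set of cliques C of H such that v ∈ C ⊆ parents_{tr(H)}(v) ∪ {v}. Then the sets C_v, for v ranging over the vertices, are pairwise disjoint and their union is the set of all cliques of H. -/
/-- `C ∈ C_v`: the clique `C` contains `v` and is contained in
`parents_{tr(H)}(v) ∪ {v}`. -/
def inCv {V : Type*} [LinearOrder V] (adj : V → V → Prop) (v : V) (C : Finset V) : Prop :=
  v ∈ C ∧ ∀ u ∈ C, u = v ∨ trEdge adj u v

section

variable {V : Type*} [LinearOrder V] {adj : V → V → Prop}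

theorem trEdge_of_adj {v w : V} (hlt : v < w) (h : adj v w) : trEdge adj v w :=
  ⟨hlt, [], .cons_cons h (.singleton w), by simp⟩

theorem inCv.le {v : V} {C : Finset V} (hv : inCv adj v C) {u : V} (hu : u ∈ C) : u ≤ v := by
  rcases hv.2 u hu with rfl | hlt
  exacts [le_rfl, hlt.1.le]

theorem inCv.eq {v w : V} {C : Finset V} (hv : inCv adj v C) (hw : inCv adj w C) : v = w :=
  le_antisymm (hw.le hv.1) (hv.le hw.1)

theorem inCv_max' {C : Finset V} (hclique : ∀ a ∈ C, ∀ b ∈ C, a ≠ b → adj a b)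
    (hne : C.Nonempty) : inCv adj (C.max' hne) C := by
  refine ⟨C.max'_mem hne, fun u hu => or_iff_not_imp_left.2 fun h => ?_⟩
  exact trEdge_of_adj ((C.le_max' u hu).lt_of_ne h) (hclique u hu _ (C.max'_mem hne) h)

end

theorem stmt_8_general {V : Type*} [LinearOrder V] (adj : V → V → Prop) :
    (∀ v w : V, v ≠ w → ∀ C : Finset V,
        (∀ a ∈ C, ∀ b ∈ C, a ≠ b → adj a b) → C.Nonempty →
          ¬ (inCv adj v C ∧ inCv adj w C)) ∧
    (∀ C : Finset V, (∀ a ∈ C, ∀ b ∈ C, a ≠ b → adj a b) → C.Nonempty →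
        ∃ v, inCv adj v C) :=
  ⟨fun _ _ hvw _ _ _ h => hvw (h.1.eq h.2), fun _ hclique hne => ⟨_, inCv_max' hclique hne⟩⟩

/-- The sets `C_v` are pairwise disjoint, and every nonempty clique of `H`
belongs to some `C_v`. -/
theorem stmt_8 {V : Type*} [Fintype V] [LinearOrder V] (adj : V → V → Prop) :
    (∀ v w : V, v ≠ w → ∀ C : Finset V,
        (∀ a ∈ C, ∀ b ∈ C, a ≠ b → adj a b) → C.Nonempty →
          ¬ (inCv adj v C ∧ inCv adj w C)) ∧
    (∀ C : Finset V, (∀ a ∈ C, ∀ b ∈ C, a ≠ b → adj a b) → C.Nonempty →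
        ∃ v, inCv adj v C) :=
  stmt_8_general adj
end

section
/- Let α : H' → H be an order-preserving graph homomorphism between finite ordered undirected graphs. Then α induces a homomorphism of the triangulations: whenever v → w is a directed edge of tr(H'), either α(v) = α(w) or α(v) → α(w) is a directed edge of tr(H). -/
/-!
Map a witnessing path `v — w₁ — ⋯ — w` of `tr H'` along `α`. Each step becomes either an edge
of `H` or a repetition; deleting the repetitions leaves a path in `H` from `α v` to `α w` whose
vertices are images of the `wᵢ`, hence all `≥ α w` by monotonicity.
-/

theorem List.exists_sublist_isChain_of_isChain_eq_or {α : Type*} {r : α → α → Prop} {b : α} :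
    ∀ (l : List α) {a : α}, IsChain (fun x y => x = y ∨ r x y) (a :: (l ++ [b])) → a ≠ b →
      ∃ l', l'.Sublist l ∧ IsChain r (a :: (l' ++ [b]))
  | [], a, h, hab => ⟨[], .slnil, isChain_pair.mpr ((isChain_pair.mp h).resolve_left hab)⟩
  | c :: l, a, h, hab => by
    rw [cons_append, isChain_cons_cons] at h
    obtain ⟨rfl | hac, hc⟩ := h
    · obtain ⟨l', hsub, hl'⟩ := exists_sublist_isChain_of_isChain_eq_or l hc hab
      exact ⟨l', hsub.cons _, hl'⟩
    · by_cases hcb : c = b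
      · subst hcb
        exact ⟨[], nil_sublist _, isChain_pair.mpr hac⟩
      · obtain ⟨l', hsub, hl'⟩ := exists_sublist_isChain_of_isChain_eq_or l hc hcb
        exact ⟨c :: l', hsub.cons_cons c, isChain_cons_cons.mpr ⟨hac, hl'⟩⟩

theorem stmt_9_general {V' V : Type*} [LinearOrder V'] [LinearOrder V]
    (adj' : V' → V' → Prop) (adj : V → V → Prop) (α : V' → V)
    (hmono : Monotone α)
    (hhom : ∀ v w, adj' v w → α v = α w ∨ adj (α v) (α w)) :
    ∀ v w, trEdge adj' v w → α v = α w ∨ trEdge adj (α v) (α w) := by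
  rintro v w ⟨hvw, l, hpath, hbound⟩
  refine or_iff_not_imp_left.mpr fun hne => ⟨(hmono hvw.le).lt_of_ne hne, ?_⟩
  have hmapped : List.IsChain (fun x y => x = y ∨ adj x y) (α v :: (l.map α ++ [α w])) := by
    simpa using List.isChain_map_of_isChain α hhom hpath
  obtain ⟨l', hsub, hpath'⟩ := List.exists_sublist_isChain_of_isChain_eq_or _ hmapped hne
  refine ⟨l', hpath', fun x hx => ?_⟩
  rcases List.mem_append.mp hx with hx | hx
  · obtain ⟨y, hy, rfl⟩ := List.mem_map.mp (hsub.subset hx)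
    exact hmono (hbound y (List.mem_append_left _ hy))
  · rw [List.mem_singleton.mp hx]

/-- An order-preserving graph homomorphism induces a homomorphism between
triangulations. -/
theorem stmt_9 {V' V : Type*} [Fintype V'] [Fintype V] [LinearOrder V'] [LinearOrder V]
    (adj' : V' → V' → Prop) (adj : V → V → Prop) (α : V' → V)
    (hmono : Monotone α)
    (hhom : ∀ v w, adj' v w → α v = α w ∨ adj (α v) (α w)) :
    ∀ v w, trEdge adj' v w → α v = α w ∨ trEdge adj (α v) (α w) :=
  stmt_9_general adj' adj α hmono hhom
end

section
/- Let G be a finite DAG with topological order satisfying: u → w and v → w with u < v implies u → v. Let ω be a probability distribution on a finite product ∏_{v∈V} X_v (all X_v finite nonempty) and suppose ω(x) = (1/Z) ∏_{v∈V} f_v(x_v | x_{parents(v)}) for all x, where each f_v : X_v × ∏_{u∈parents(v)} X_u → ℝ≥0 is an arbitrary nonnegative function and Z > 0 a normalisation constant. Then there exist stochastic matrices g_v (i.e. g_v ≥ 0 and ∑_{y∈X_v} g_v(y | x_{parents(v)}) = 1 for all arguments) such that ω(x) = ∏_{v∈V} g_v(x_v | x_{parents(v)}) for all x. -/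
/-!
Eliminate the vertices in decreasing order. For the maximal vertex `m`, split its factor as
`f_m = g_m · F`, where `F` is the marginal `∑_y f_m(y | x_pa(m))` and `g_m = f_m / F` is
stochastic. `F` depends only on the parents of `m`; by triangulation all of them lie in the family
of the maximal parent `w`, so `F` can be absorbed into `f_w` (or into the constant when `m` is a
root), and the remaining vertices are handled by induction. This leaves `ω = (c / Z) ∏ g_v`, and
a product of stochastic kernels along a topological order sums to `1`, which forces `c = Z`.
-/

open Finset Function

namespace BayesianNetwork

variable {V : Type*} {X : V → Type*} {E : V → V → Prop}

/-- In the terminology of Bayesian networks, the family of `v` is `v` together with its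
parents. -/
def DependsOnFamily (E : V → V → Prop) (v : V) (φ : (∀ u, X u) → ℝ) : Prop :=
  ∀ x x' : ∀ u, X u, x v = x' v → (∀ u, E u v → x u = x' u) → φ x = φ x'

def DependsOnParents (E : V → V → Prop) (v : V) (φ : (∀ u, X u) → ℝ) : Prop :=
  ∀ x x' : ∀ u, X u, (∀ u, E u v → x u = x' u) → φ x = φ x'

variable {v : V} {φ ψ : (∀ u, X u) → ℝ}

lemma DependsOnFamily.mul (hφ : DependsOnFamily E v φ) (hψ : DependsOnFamily E v ψ) :
    DependsOnFamily E v (φ * ψ) := fun x x' hv hpa => by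
  simp only [Pi.mul_apply, hφ x x' hv hpa, hψ x x' hv hpa]

lemma DependsOnParents.dependsOnFamily_of_isMaxParent [LinearOrder V]
    (htri : ∀ u v w, E u w → E v w → u < v → E u v) {m w : V} (hwm : E w m)
    (hmax : ∀ u, E u m → u ≤ w) (hφ : DependsOnParents E m φ) : DependsOnFamily E w φ :=
  fun x x' hw hpa => hφ x x' fun u hu => (hmax u hu).eq_or_lt.elim
    (fun h => h ▸ hw) fun h => hpa u (htri u w m hu hwm h)

variable [DecidableEq V]

lemma DependsOnFamily.apply_update_of_lt [LinearOrder V] (htopo : ∀ u w, E u w → u < w)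
    (hφ : DependsOnFamily E v φ) {a : V} (hva : v < a) (x : ∀ u, X u) (y : X a) :
    φ (update x a y) = φ x :=
  hφ _ _ (update_of_ne hva.ne y x) fun u hu => update_of_ne ((htopo u v hu).trans hva).ne y x

lemma DependsOnParents.exists_absorb [LinearOrder V] [∀ v, Nonempty (X v)]
    (htri : ∀ u v w, E u w → E v w → u < v → E u v) {m : V} {F : (∀ u, X u) → ℝ}
    (hF : DependsOnParents E m F) (hF₀ : 0 ≤ F) {s : Finset V} (hpa : ∀ u, E u m → u ∈ s)
    {f : V → (∀ u, X u) → ℝ} (hf₀ : ∀ v, 0 ≤ f v) (hf : ∀ v, DependsOnFamily E v (f v)) :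
    ∃ (f' : V → (∀ u, X u) → ℝ) (k : ℝ), (∀ v, 0 ≤ f' v) ∧
      (∀ v, DependsOnFamily E v (f' v)) ∧ ∀ x, F x * ∏ v ∈ s, f v x = k * ∏ v ∈ s, f' v x := by
  classical
  by_cases hroot : ∃ u, E u m
  · have hpaf : ∀ u, E u m → u ∈ s.filter (E · m) := fun u hu => mem_filter.2 ⟨hpa u hu, hu⟩
    obtain ⟨w, hw, hmax⟩ := (s.filter (E · m)).exists_max_image id (hroot.imp hpaf)
    obtain ⟨hws, hwm⟩ := mem_filter.1 hw
    replace hmax : ∀ u, E u m → u ≤ w := fun u hu => hmax u (hpaf u hu)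
    refine ⟨update f w (f w * F), 1, (forall_update_iff f fun v g => 0 ≤ g).2
      ⟨mul_nonneg (hf₀ w) hF₀, fun v _ => hf₀ v⟩,
      (forall_update_iff f fun v g => DependsOnFamily E v g).2
      ⟨(hf w).mul (hF.dependsOnFamily_of_isMaxParent htri hwm hmax), fun v _ => hf v⟩,
      fun x => ?_⟩
    have hrest : ∀ v ∈ s.erase w, update f w (f w * F) v x = f v x := fun v hv => by
      rw [update_of_ne (ne_of_mem_erase hv)]
    rw [one_mul, ← mul_prod_erase s _ hws, ← mul_prod_erase s (fun v => update f w _ v x) hws,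
      update_self, Pi.mul_apply, prod_congr rfl hrest]
    ring
  · simp only [not_exists] at hroot
    obtain ⟨x₀⟩ : Nonempty (∀ u, X u) := inferInstance
    exact ⟨f, F x₀, hf₀, hf, fun x => by rw [hF x x₀ fun u hu => (hroot u hu).elim]⟩

variable [∀ v, Fintype (X v)]

structure IsStochasticKernel (E : V → V → Prop) (v : V) (g : (∀ u, X u) → ℝ) : Prop where
  nonneg : 0 ≤ g
  dependsOnFamily : DependsOnFamily E v g
  sum_update_eq_one : ∀ x, ∑ y : X v, g (update x v y) = 1

noncomputable def marginal (v : V) (φ : (∀ u, X u) → ℝ) (x : ∀ u, X u) : ℝ :=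
  ∑ y : X v, φ (update x v y)

/-- Where the marginal vanishes, `φ` vanishes on the whole fibre, so any distribution on `X v`
will do; we take the uniform one. -/
noncomputable def normalize (v : V) (φ : (∀ u, X u) → ℝ) (x : ∀ u, X u) : ℝ :=
  if marginal v φ x = 0 then (Fintype.card (X v) : ℝ)⁻¹ else φ x / marginal v φ x

lemma sum_inv_card_eq_one (α : Type*) [Fintype α] [Nonempty α] :
    ∑ _y : α, (Fintype.card α : ℝ)⁻¹ = 1 := by
  rw [sum_const, card_univ, nsmul_eq_mul]
  exact mul_inv_cancel₀ (Nat.cast_ne_zero.2 Fintype.card_ne_zero)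

lemma isStochasticKernel_uniform [Nonempty (X v)] :
    IsStochasticKernel E v fun _ : (∀ u, X u) => (Fintype.card (X v) : ℝ)⁻¹ where
  nonneg _ := by positivity
  dependsOnFamily _ _ _ _ := rfl
  sum_update_eq_one _ := sum_inv_card_eq_one (X v)

lemma marginal_update (φ : (∀ u, X u) → ℝ) (x : ∀ u, X u) (y : X v) :
    marginal v φ (update x v y) = marginal v φ x := by
  simp only [marginal, update_idem]

lemma marginal_nonneg (hφ : 0 ≤ φ) : 0 ≤ marginal v φ :=
  fun _ => sum_nonneg fun _ _ => hφ _

lemma le_marginal (hφ : 0 ≤ φ) (x : ∀ u, X u) : φ x ≤ marginal v φ x := by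
  simpa [marginal] using single_le_sum (fun y _ => hφ (update x v y)) (mem_univ (x v))

lemma DependsOnFamily.dependsOnParents_marginal (hirr : ¬ E v v) (hφ : DependsOnFamily E v φ) :
    DependsOnParents E v (marginal v φ) := fun x x' hpa =>
  sum_congr rfl fun y _ => hφ _ _ (by simp) fun u hu => by
    have huv : u ≠ v := fun h => hirr (h ▸ hu)
    simp only [update_of_ne huv, hpa u hu]

lemma normalize_mul_marginal (hφ : 0 ≤ φ) (x : ∀ u, X u) :
    normalize v φ x * marginal v φ x = φ x := by
  by_cases h0 : marginal v φ x = 0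
  · have hφx : φ x = 0 := le_antisymm (h0 ▸ le_marginal hφ x) (hφ x)
    rw [h0, hφx, mul_zero]
  · rw [normalize, if_neg h0, div_mul_cancel₀ _ h0]

lemma isStochasticKernel_normalize [Nonempty (X v)] (hirr : ¬ E v v) (hφ : 0 ≤ φ)
    (hφv : DependsOnFamily E v φ) : IsStochasticKernel E v (normalize v φ) where
  nonneg x := by
    unfold normalize
    split_ifs
    · positivity
    · exact div_nonneg (hφ x) (marginal_nonneg hφ x)
  dependsOnFamily x x' hv hpa := by
    simp only [normalize, hφv x x' hv hpa, hφv.dependsOnParents_marginal hirr x x' hpa]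
  sum_update_eq_one x := by
    simp only [normalize, marginal_update]
    split_ifs with h0
    · exact sum_inv_card_eq_one (X v)
    · rw [← sum_div, ← marginal, div_self h0]

theorem exists_isStochasticKernel_factorization [LinearOrder V] [∀ v, Nonempty (X v)]
    (htopo : ∀ u w, E u w → u < w) (htri : ∀ u v w, E u w → E v w → u < v → E u v) (S : Finset V)
    (hS : ∀ u v, E u v → v ∈ S → u ∈ S) {f : V → (∀ u, X u) → ℝ} (hf₀ : ∀ v, 0 ≤ f v)
    (hf : ∀ v, DependsOnFamily E v (f v)) :
    ∃ (g : V → (∀ u, X u) → ℝ) (c : ℝ), (∀ v, IsStochasticKernel E v (g v)) ∧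
      ∀ x, ∏ v ∈ S, f v x = c * ∏ v ∈ S, g v x := by
  induction S using Finset.induction_on_max generalizing f with
  | empty => exact ⟨_, 1, fun v => isStochasticKernel_uniform, by simp⟩
  | insert m s hlt ih =>
    have hm : m ∉ s := fun h => (hlt m h).false
    have hirr : ¬ E m m := fun h => (htopo m m h).false
    have hpa : ∀ u, E u m → u ∈ s := fun u hu =>
      (mem_insert.1 (hS u m hu (mem_insert_self m s))).resolve_left (htopo u m hu).ne
    have hs : ∀ u v, E u v → v ∈ s → u ∈ s := fun u v huv hv =>
      (mem_insert.1 (hS u v huv (mem_insert_of_mem hv))).resolve_left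
        ((htopo u v huv).trans (hlt v hv)).ne
    obtain ⟨f', k, hf'₀, hf', habsorb⟩ := ((hf m).dependsOnParents_marginal hirr).exists_absorb
      htri (marginal_nonneg (hf₀ m)) hpa hf₀ hf
    obtain ⟨g, c, hg, hfg⟩ := ih hs hf'₀ hf'
    refine ⟨update g m (normalize m (f m)), k * c,
      (forall_update_iff g fun v g => IsStochasticKernel E v g).2
        ⟨isStochasticKernel_normalize hirr (hf₀ m) (hf m), fun v _ => hg v⟩, fun x => ?_⟩
    have hrest : ∏ v ∈ s, update g m (normalize m (f m)) v x = ∏ v ∈ s, g v x :=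
      prod_congr rfl fun v hv => by rw [update_of_ne (hlt v hv).ne]
    calc ∏ v ∈ insert m s, f v x
        = normalize m (f m) x * (marginal m (f m) x * ∏ v ∈ s, f v x) := by
          rw [prod_insert hm, ← normalize_mul_marginal (hf₀ m) x, mul_assoc]
      _ = k * c * (normalize m (f m) x * ∏ v ∈ s, g v x) := by rw [habsorb, hfg]; ring
      _ = k * c * ∏ v ∈ insert m s, update g m (normalize m (f m)) v x := by
          rw [prod_insert hm, update_self, hrest]

variable [Fintype V]

lemma sum_sum_update (m : V) (h : (∀ u, X u) → ℝ) :
    ∑ x : ∀ u, X u, ∑ y : X m, h (update x m y) = Fintype.card (X m) * ∑ x, h x := by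
  let e : (∀ u, X u) × X m ≃ (∀ u, X u) × X m :=
    ⟨fun p => (update p.1 m p.2, p.1 m), fun p => (update p.1 m p.2, p.1 m),
      fun p => by simp, fun p => by simp⟩
  rw [← Fintype.sum_prod_type',
    Fintype.sum_equiv e (fun p => h (update p.1 m p.2)) (fun p => h p.1) fun _ => rfl,
    Fintype.sum_prod_type, mul_sum]
  simp

lemma sum_prod_eq_prod_card_compl [LinearOrder V] [∀ v, Nonempty (X v)]
    (htopo : ∀ u w, E u w → u < w) {g : V → (∀ u, X u) → ℝ} (hg : ∀ v, DependsOnFamily E v (g v))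
    (hg₁ : ∀ v x, ∑ y : X v, g v (update x v y) = 1) (S : Finset V) :
    ∑ x, ∏ v ∈ S, g v x = ∏ v ∈ Sᶜ, (Fintype.card (X v) : ℝ) := by
  induction S using Finset.induction_on_max with
  | empty => simp [Fintype.card_pi]
  | insert m s hlt ih =>
    have hm : m ∉ s := fun h => (hlt m h).false
    have hcard :
        (Fintype.card (X m) : ℝ) * ∑ x, ∏ v ∈ insert m s, g v x = ∑ x, ∏ v ∈ s, g v x := by
      rw [← sum_sum_update m]
      refine sum_congr rfl fun x _ => ?_
      simp only [prod_insert hm, fun y => prod_congr rfl fun v hv =>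
        (hg v).apply_update_of_lt htopo (hlt v hv) x y, ← sum_mul, hg₁, one_mul]
    rw [ih, ← mul_prod_erase sᶜ _ (mem_compl.2 hm), ← compl_insert] at hcard
    exact mul_left_cancel₀ (Nat.cast_ne_zero.2 Fintype.card_ne_zero) hcard

end BayesianNetwork

theorem stmt_12_general {V : Type*} [Fintype V] [DecidableEq V] [LinearOrder V]
    (E : V → V → Prop)
    (htopo : ∀ u w, E u w → u < w)
    (htri : ∀ u v w, E u w → E v w → u < v → E u v)
    (X : V → Type*) [∀ v, Fintype (X v)] [∀ v, Nonempty (X v)]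
    (ω : (∀ v, X v) → ℝ)
    (hωsum : ∑ x, ω x = 1)
    (f : ∀ v : V, (∀ u, X u) → ℝ)
    (hfnn : ∀ v x, 0 ≤ f v x)
    (hfdep : ∀ v (x x' : ∀ u, X u), x v = x' v → (∀ u, E u v → x u = x' u) →
      f v x = f v x')
    (Z : ℝ)
    (hfact : ∀ x, ω x = (1 / Z) * ∏ v, f v x) :
    ∃ g : ∀ v : V, (∀ u, X u) → ℝ,
      (∀ v x, 0 ≤ g v x) ∧
      (∀ v (x x' : ∀ u, X u), x v = x' v → (∀ u, E u v → x u = x' u) →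
        g v x = g v x') ∧
      (∀ v (x : ∀ u, X u), ∑ y : X v, g v (Function.update x v y) = 1) ∧
      (∀ x, ω x = ∏ v, g v x) := by
  obtain ⟨g, c, hg, hfg⟩ := BayesianNetwork.exists_isStochasticKernel_factorization htopo htri
    univ (fun u _ _ _ => mem_univ u) hfnn hfdep
  have hprob : ∑ x, ∏ v, g v x = 1 := by
    simpa using BayesianNetwork.sum_prod_eq_prod_card_compl htopo (fun v => (hg v).dependsOnFamily)
      (fun v => (hg v).sum_update_eq_one) univ
  have hω : ∀ x, ω x = c / Z * ∏ v, g v x := fun x => by rw [hfact, hfg]; ring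
  have hcZ : c / Z = 1 := by simpa [hω, ← mul_sum, hprob] using hωsum
  exact ⟨g, fun v => (hg v).nonneg, fun v => (hg v).dependsOnFamily,
    fun v => (hg v).sum_update_eq_one, fun x => by rw [hω, hcZ, one_mul]⟩

/-- Normalisation lemma for triangulated DAGs: a distribution factorising
through nonnegative factors (up to a normalisation constant) factorises
through stochastic matrices. -/
theorem stmt_12 {V : Type*} [Fintype V] [DecidableEq V] [LinearOrder V]
    (E : V → V → Prop)
    (htopo : ∀ u w, E u w → u < w)
    (htri : ∀ u v w, E u w → E v w → u < v → E u v)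
    (X : V → Type*) [∀ v, Fintype (X v)] [∀ v, Nonempty (X v)]
    (ω : (∀ v, X v) → ℝ)
    (hωnn : ∀ x, 0 ≤ ω x) (hωsum : ∑ x, ω x = 1)
    (f : ∀ v : V, (∀ u, X u) → ℝ)
    (hfnn : ∀ v x, 0 ≤ f v x)
    (hfdep : ∀ v (x x' : ∀ u, X u), x v = x' v → (∀ u, E u v → x u = x' u) →
      f v x = f v x')
    (Z : ℝ) (hZ : 0 < Z)
    (hfact : ∀ x, ω x = (1 / Z) * ∏ v, f v x) :
    ∃ g : ∀ v : V, (∀ u, X u) → ℝ,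
      (∀ v x, 0 ≤ g v x) ∧
      (∀ v (x x' : ∀ u, X u), x v = x' v → (∀ u, E u v → x u = x' u) →
        g v x = g v x') ∧
      (∀ v (x : ∀ u, X u), ∑ y : X v, g v (Function.update x v y) = 1) ∧
      (∀ x, ω x = ∏ v, g v x) :=
  stmt_12_general E htopo htri X ω hωsum f hfnn hfdep Z hfact
end
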